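/- Let B, C ∈ B(H) be self-adjoint operators. Then max{ ‖B + C‖², ‖B − C‖² } ≤ ‖B² + C²‖ + 2·w(|B||C|). -/

import Mathlib

open ContinuousLinearMap

variable {H : Type*} [NormedAddCommGroup H] [InnerProductSpace ℂ H] [CompleteSpace H]

/-- The numerical radius of a bounded linear operator:
`w(T) = sup { |⟨Tx, x⟩| : ‖x‖ = 1 }`. -/
noncomputable def numRadius {E : Type*} [NormedAddCommGroup E] [InnerProductSpace ℂ E]
    (T : E →L[ℂ] E) : ℝ :=
  sSup {r : ℝ | ∃ x : E, ‖x‖ = 1 ∧ r = ‖(inner ℂ (T x) x : ℂ)‖}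

/-- The absolute value `|T| = (T*T)^(1/2)` of a bounded linear operator.
Note `opAbs (adjoint T) = (T T*)^(1/2) = |T*|`. -/
noncomputable def opAbs (T : H →L[ℂ] H) : H →L[ℂ] H := CFC.sqrt (adjoint T * T)

/-- The off-diagonal operator matrix `[[0, B], [C, 0]]` acting on `H ⊕ H`
(with the Hilbert space structure `WithLp 2 (H × H)`) by `(x₁, x₂) ↦ (B x₂, C x₁)`. -/
noncomputable def offDiag (B C : H →L[ℂ] H) :
    WithLp 2 (H × H) →L[ℂ] WithLp 2 (H × H) :=
  ((WithLp.prodContinuousLinearEquiv 2 ℂ H H).symm : (H × H) →L[ℂ] WithLp 2 (H × H)).comp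
    (((B.comp (ContinuousLinearMap.snd ℂ H H)).prod
        (C.comp (ContinuousLinearMap.fst ℂ H H))).comp
      ((WithLp.prodContinuousLinearEquiv 2 ℂ H H) : WithLp 2 (H × H) →L[ℂ] H × H))

/-! For self-adjoint `a` one has `-|a| ≤ a ≤ |a|`, hence `±(B ± C) ≤ |B| + |C|` and
`‖B ± C‖ ≤ ‖|B| + |C|‖`. By the C⋆-identity, `‖|B| + |C|‖² = ‖B² + C² + (T + T*)‖` with
`T = |B||C|`, and the self-adjoint operator `T + T*` has norm at most `2 w(T)` because its norm is
the supremum of its Rayleigh quotients and `⟨(T + T*)x, x⟩ = 2 Re ⟨Tx, x⟩`. -/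

section CStarAlgebra

variable {A : Type*} [CStarAlgebra A] [PartialOrder A] [StarOrderedRing A]

lemma CFC.le_abs_self {a : A} (ha : IsSelfAdjoint a) : a ≤ CFC.abs a := by
  rw [← sub_nonneg, CFC.abs_sub_self a]
  exact smul_nonneg zero_le_two (CFC.negPart_nonneg a)

lemma CFC.neg_abs_le_self {a : A} (ha : IsSelfAdjoint a) : -CFC.abs a ≤ a := by
  rw [neg_le_iff_add_nonneg', CFC.abs_add_self a]
  exact smul_nonneg zero_le_two (CFC.posPart_nonneg a)

lemma IsSelfAdjoint.norm_le_norm_of_neg_le_of_le {a b : A} (ha : IsSelfAdjoint a)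
    (h₁ : -b ≤ a) (h₂ : a ≤ b) : ‖a‖ ≤ ‖b‖ := by
  nontriviality A
  have hb : IsSelfAdjoint b := by
    simpa using (IsSelfAdjoint.of_nonneg (sub_nonneg.mpr h₂)).add ha
  have hupper : a ≤ algebraMap ℝ A ‖b‖ := h₂.trans hb.le_algebraMap_norm_self
  have hlower : algebraMap ℝ A (-‖b‖) ≤ a := by
    rw [map_neg]
    exact (neg_le_neg hb.le_algebraMap_norm_self).trans h₁
  rcases CStarAlgebra.norm_or_neg_norm_mem_spectrum ha with h | h
  · exact (le_algebraMap_iff_spectrum_le ha).mp hupper _ h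
  · exact neg_le_neg_iff.mp ((algebraMap_le_iff_le_spectrum ha).mp hlower _ h)

lemma IsSelfAdjoint.norm_add_le_norm_abs_add_abs {a b : A} (ha : IsSelfAdjoint a)
    (hb : IsSelfAdjoint b) : ‖a + b‖ ≤ ‖CFC.abs a + CFC.abs b‖ := by
  refine (ha.add hb).norm_le_norm_of_neg_le_of_le ?_ ?_
  · rw [neg_add]
    exact add_le_add (CFC.neg_abs_le_self ha) (CFC.neg_abs_le_self hb)
  · exact add_le_add (CFC.le_abs_self ha) (CFC.le_abs_self hb)

lemma IsSelfAdjoint.norm_sub_le_norm_abs_add_abs {a b : A} (ha : IsSelfAdjoint a)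
    (hb : IsSelfAdjoint b) : ‖a - b‖ ≤ ‖CFC.abs a + CFC.abs b‖ := by
  simpa [sub_eq_add_neg, CFC.abs_neg] using ha.norm_add_le_norm_abs_add_abs hb.neg

lemma IsSelfAdjoint.norm_abs_add_abs_sq_le {a b : A} (ha : IsSelfAdjoint a)
    (hb : IsSelfAdjoint b) :
    ‖CFC.abs a + CFC.abs b‖ ^ 2 ≤
      ‖a ^ 2 + b ^ 2‖ + ‖CFC.abs a * CFC.abs b + CFC.abs b * CFC.abs a‖ := by
  have habs_sq {c : A} (hc : IsSelfAdjoint c) : CFC.abs c * CFC.abs c = c ^ 2 := by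
    rw [CFC.abs_mul_abs, hc.star_eq, sq]
  have hsa : IsSelfAdjoint (CFC.abs a + CFC.abs b) :=
    .of_nonneg (add_nonneg (CFC.abs_nonneg a) (CFC.abs_nonneg b))
  calc ‖CFC.abs a + CFC.abs b‖ ^ 2
      = ‖CFC.abs a * CFC.abs a + CFC.abs b * CFC.abs b +
          (CFC.abs a * CFC.abs b + CFC.abs b * CFC.abs a)‖ := by
        rw [← hsa.norm_mul_self]
        congr 1
        noncomm_ring
    _ ≤ ‖a ^ 2 + b ^ 2‖ + ‖CFC.abs a * CFC.abs b + CFC.abs b * CFC.abs a‖ := by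
        rw [habs_sq ha, habs_sq hb]
        exact norm_add_le _ _

end CStarAlgebra

section NumericalRadius

open scoped InnerProductSpace

variable {E : Type*} [NormedAddCommGroup E] [InnerProductSpace ℂ E]

lemma numRadius_nonneg (T : E →L[ℂ] E) : 0 ≤ numRadius T :=
  Real.sSup_nonneg (by rintro r ⟨y, -, rfl⟩; positivity)

lemma norm_inner_self_le_numRadius (T : E →L[ℂ] E) {x : E} (hx : ‖x‖ = 1) :
    ‖⟪T x, x⟫_ℂ‖ ≤ numRadius T := by
  refine le_csSup ⟨‖T‖, ?_⟩ ⟨x, hx, rfl⟩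
  rintro r ⟨y, hy, rfl⟩
  calc ‖⟪T y, y⟫_ℂ‖ ≤ ‖T y‖ * ‖y‖ := norm_inner_le_norm _ _
    _ ≤ ‖T‖ * ‖y‖ * ‖y‖ := by gcongr; exact T.le_opNorm y
    _ = ‖T‖ := by rw [hy, mul_one, mul_one]

lemma abs_rayleighQuotient_le_numRadius (T : E →L[ℂ] E) (x : E) :
    |T.rayleighQuotient x| ≤ numRadius T := by
  rcases eq_or_ne x 0 with rfl | hx
  · simpa using numRadius_nonneg T
  have hu : ‖(‖x‖ : ℂ)⁻¹ • x‖ = 1 := norm_smul_inv_norm hx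
  rw [← T.rayleigh_smul x (c := (‖x‖ : ℂ)⁻¹) (by simpa using hx), rayleighQuotient,
    reApplyInnerSelf_apply, hu, one_pow, div_one]
  exact (RCLike.abs_re_le_norm _).trans (norm_inner_self_le_numRadius T hu)

variable [CompleteSpace E]

lemma rayleighQuotient_add_adjoint (T : E →L[ℂ] E) (x : E) :
    (T + adjoint T).rayleighQuotient x = 2 * T.rayleighQuotient x := by
  rw [rayleighQuotient_add, two_mul]
  congr 1
  simp only [rayleighQuotient, reApplyInnerSelf_apply, adjoint_inner_left, inner_re_symm]

lemma norm_add_adjoint_le_two_mul_numRadius (T : E →L[ℂ] E) :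
    ‖T + adjoint T‖ ≤ 2 * numRadius T := by
  have hsymm : (T + adjoint T).IsSymmetric :=
    isSelfAdjoint_iff_isSymmetric.mp (IsSelfAdjoint.add_star_self T)
  rw [norm_eq_iSup_rayleighQuotient _ hsymm]
  refine ciSup_le fun x ↦ ?_
  rw [rayleighQuotient_add_adjoint, abs_mul, abs_two]
  gcongr
  exact abs_rayleighQuotient_le_numRadius T x

end NumericalRadius

lemma opAbs_eq_abs (T : H →L[ℂ] H) : opAbs T = CFC.abs T := rfl

theorem stmt_18 (B C : H →L[ℂ] H) (hB : IsSelfAdjoint B) (hC : IsSelfAdjoint C) :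
    max (‖B + C‖ ^ 2) (‖B - C‖ ^ 2) ≤
      ‖B ^ 2 + C ^ 2‖ + 2 * numRadius (opAbs B * opAbs C) := by
  rw [opAbs_eq_abs, opAbs_eq_abs]
  have hQP : adjoint (CFC.abs B * CFC.abs C) = CFC.abs C * CFC.abs B := by
    rw [← star_eq_adjoint, star_mul,
      (IsSelfAdjoint.of_nonneg (CFC.abs_nonneg B)).star_eq,
      (IsSelfAdjoint.of_nonneg (CFC.abs_nonneg C)).star_eq]
  calc max (‖B + C‖ ^ 2) (‖B - C‖ ^ 2) ≤ ‖CFC.abs B + CFC.abs C‖ ^ 2 :=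
        max_le (by gcongr; exact hB.norm_add_le_norm_abs_add_abs hC)
          (by gcongr; exact hB.norm_sub_le_norm_abs_add_abs hC)
    _ ≤ ‖B ^ 2 + C ^ 2‖ + ‖CFC.abs B * CFC.abs C + CFC.abs C * CFC.abs B‖ :=
        hB.norm_abs_add_abs_sq_le hC
    _ ≤ ‖B ^ 2 + C ^ 2‖ + 2 * numRadius (CFC.abs B * CFC.abs C) := by
        rw [← hQP]
        gcongr
        exact norm_add_adjoint_le_two_mul_numRadius _
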